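/- arXiv:2110.15476 — 4 statements merged into one kernel-verified Lean document; each statement's English description precedes it below -/
import Mathlib

section
/- Let g = ⊕_{j ∈ (1/2)Z} g_j be a 1/2-Z-graded finite-dimensional Lie algebra over a field of characteristic 0 with a non-degenerate invariant symmetric bilinear form (.|.) compatible with the grading (i.e. (g_i | g_j) = 0 unless i + j = 0). Define κ_{<0}(u,v) = tr_g(p_{<0} ∘ ad u ∘ ad v) and κ_{>0}(u,v) = tr_g(p_{>0} ∘ ad u ∘ ad v), where p_{<0}, p_{>0} are the projections to g_{<0} = ⊕_{j<0} g_j and g_{>0} = ⊕_{j>0} g_j along the grading. Then for all u, v ∈ g such that ad u ∘ ad v preserves the grading, κ_{<0}(u,v) = κ_{>0}(u,v) − tr_{g_{>0}}(p_{>0} ∘ ad [u,v]). -/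
/-!
Invariance of `B` makes `ad v ∘ ad u` the `B`-adjoint of `ad u ∘ ad v`, and compatibility of `B`
with the grading makes `p_{>0}` the adjoint of `p_{<0}`. Since `B` identifies `L` with its dual
and turns adjoints into transposes, adjoint endomorphisms have equal traces, so
`tr(p_{<0} ad u ad v) = tr(ad v ad u p_{>0}) = tr(p_{>0} ad v ad u)`. Writing
`ad [u,v] = ad u ad v - ad v ad u` and using `tr(p_{>0} X p_{>0}) = tr(p_{>0} X)`, which holds as
`p_{>0}` is idempotent, gives the identity.
-/

open LinearMap

theorem LinearMap.trace_eq_of_isAdjointPair {F L : Type*} [Field F] [AddCommGroup L] [Module F L]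
    [FiniteDimensional F L] {B : L →ₗ[F] L →ₗ[F] F} (hB : Function.Injective B)
    {f f' : Module.End F L} (h : IsAdjointPair B B f f') : trace F L f = trace F L f' := by
  let e : L ≃ₗ[F] Module.Dual F L := B.linearEquivOfInjective hB Subspace.dual_finrank_eq.symm
  have hf : e.symm.conj (Module.Dual.transpose f') = f := by
    ext x
    apply e.injective
    ext y
    simp [LinearEquiv.conj_apply, e, Module.Dual.transpose_apply, h x y]
  rw [← hf, trace_conj', trace_transpose']

theorem LinearMap.trace_comp_comp_of_idempotent {R M : Type*} [CommRing R] [AddCommGroup M]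
    [Module R M] {p : Module.End R M} (hp : p ∘ₗ p = p) (T : Module.End R M) :
    trace R M (p ∘ₗ T ∘ₗ p) = trace R M (p ∘ₗ T) := by
  rw [← comp_assoc, ← Module.End.mul_eq_comp (p ∘ₗ T), trace_mul_comm, Module.End.mul_eq_comp,
    ← comp_assoc, hp]

theorem LinearMap.trace_comp_eq_sub_of_isAdjointPair {F L : Type*} [Field F] [AddCommGroup L]
    [Module F L] [FiniteDimensional F L] {B : L →ₗ[F] L →ₗ[F] F} (hB : Function.Injective B)
    {p q T S : Module.End F L} (hpq : IsAdjointPair B B p q) (hq : q ∘ₗ q = q)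
    (hTS : IsAdjointPair B B T S) :
    trace F L (p ∘ₗ T) = trace F L (q ∘ₗ T) - trace F L (q ∘ₗ (T - S) ∘ₗ q) := by
  have hpT : trace F L (p ∘ₗ T) = trace F L (q ∘ₗ S) :=
    (trace_eq_of_isAdjointPair hB (hTS.comp hpq)).trans (trace_mul_comm F S q)
  rw [trace_comp_comp_of_idempotent hq, comp_sub, map_sub, hpT, sub_sub_cancel]

theorem LinearMap.ext_of_iSup_eq_top {R M N ι : Type*} [Semiring R] [AddCommMonoid M] [Module R M]
    [AddCommMonoid N] [Module R N] {g : ι → Submodule R M} (hg : ⨆ i, g i = ⊤)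
    {f f' : M →ₗ[R] N} (h : ∀ i, ∀ x ∈ g i, f x = f' x) : f = f' :=
  ext_on (s := ⋃ i, (g i : Set M)) (by rw [← Submodule.iSup_eq_span, hg])
    fun x hx => by obtain ⟨i, hi⟩ := Set.mem_iUnion.mp hx; exact h i x hi

section Graded

variable {F L ι : Type*} [CommRing F] [AddCommGroup L] [Module F L] {g : ι → Submodule F L}

theorem comp_self_eq_of_apply_eq_ite (hg : ⨆ i, g i = ⊤) (P : ι → Prop) [DecidablePred P]
    {p : Module.End F L} (hp : ∀ i, ∀ a ∈ g i, p a = if P i then a else 0) : p ∘ₗ p = p :=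
  ext_of_iSup_eq_top hg fun i a ha => by
    by_cases hi : P i <;> simp [hp i a ha, hi]

variable [AddCommGroup ι] [LinearOrder ι] [IsOrderedAddMonoid ι]

theorem isAdjointPair_projNeg_projPos (hg : ⨆ i, g i = ⊤) {B : L →ₗ[F] L →ₗ[F] F}
    (hcompat : ∀ i j, i + j ≠ 0 → ∀ x ∈ g i, ∀ y ∈ g j, B x y = 0)
    {pneg ppos : Module.End F L} (hpneg : ∀ j, ∀ a ∈ g j, pneg a = if j < 0 then a else 0)
    (hppos : ∀ j, ∀ a ∈ g j, ppos a = if 0 < j then a else 0) :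
    IsAdjointPair B B pneg ppos := by
  rw [isAdjointPair_iff_comp_eq_compl₂]
  refine ext_of_iSup_eq_top hg fun i a ha => ext_of_iSup_eq_top hg fun j b hb => ?_
  rw [comp_apply, compl₂_apply, hpneg i a ha, hppos j b hb]
  by_cases hij : i + j = 0
  · obtain rfl := eq_neg_of_add_eq_zero_right hij
    by_cases hi : i < 0 <;> simp [hi, Left.neg_pos_iff]
  · split_ifs <;> simp [hcompat i j hij a ha b hb]

end Graded

section Lie

variable {F L : Type*} [CommRing F] [LieRing L] [LieAlgebra F L] {B : L →ₗ[F] L →ₗ[F] F}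

theorem isAdjointPair_ad_neg_ad (hinv : ∀ x y z, B ⁅x, y⁆ z = B x ⁅y, z⁆) (u : L) :
    IsAdjointPair B B (LieAlgebra.ad F L u) ⇑(-LieAlgebra.ad F L u) := fun x y => by
  rw [LieAlgebra.ad_apply, ← lie_skew, map_neg, LinearMap.neg_apply, hinv, LinearMap.neg_apply,
    map_neg, LieAlgebra.ad_apply]

theorem isAdjointPair_ad_comp_ad (hinv : ∀ x y z, B ⁅x, y⁆ z = B x ⁅y, z⁆) (u v : L) :
    IsAdjointPair B B (LieAlgebra.ad F L u ∘ₗ LieAlgebra.ad F L v)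
      (LieAlgebra.ad F L v ∘ₗ LieAlgebra.ad F L u) := by
  have h := (isAdjointPair_ad_neg_ad hinv u).mul (isAdjointPair_ad_neg_ad hinv v)
  rwa [neg_mul_neg] at h

theorem ad_lie_eq_sub (u v : L) : LieAlgebra.ad F L ⁅u, v⁆ =
    LieAlgebra.ad F L u ∘ₗ LieAlgebra.ad F L v - LieAlgebra.ad F L v ∘ₗ LieAlgebra.ad F L u := by
  ext x
  simp only [LinearMap.sub_apply, comp_apply, LieAlgebra.ad_apply, lie_lie]

end Lie

theorem stmt1_general {F L : Type*} [Field F] [LieRing L] [LieAlgebra F L]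
    [FiniteDimensional F L]
    (g : ℚ → Submodule F L) (hInt : DirectSum.IsInternal g)
    (B : L →ₗ[F] L →ₗ[F] F)
    (hinv : ∀ x y z, B ⁅x, y⁆ z = B x ⁅y, z⁆)
    (hnd : ∀ x, (∀ y, B x y = 0) → x = 0)
    (hcompat : ∀ (i j : ℚ), i + j ≠ 0 → ∀ x ∈ g i, ∀ y ∈ g j, B x y = 0)
    (pneg ppos : Module.End F L)
    (hpneg : ∀ (j : ℚ), ∀ a ∈ g j, pneg a = if j < 0 then a else 0)
    (hppos : ∀ (j : ℚ), ∀ a ∈ g j, ppos a = if 0 < j then a else 0)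
    (u v : L) :
    LinearMap.trace F L (pneg ∘ₗ (LieAlgebra.ad F L u ∘ₗ LieAlgebra.ad F L v))
      = LinearMap.trace F L (ppos ∘ₗ (LieAlgebra.ad F L u ∘ₗ LieAlgebra.ad F L v))
        - LinearMap.trace F L (ppos ∘ₗ LieAlgebra.ad F L ⁅u, v⁆ ∘ₗ ppos) := by
  have hg := hInt.submodule_iSup_eq_top
  rw [ad_lie_eq_sub]
  exact trace_comp_eq_sub_of_isAdjointPair
    ((injective_iff_map_eq_zero B).mpr fun x hx => hnd x (by simp [hx]))
    (isAdjointPair_projNeg_projPos hg hcompat hpneg hppos)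
    (comp_self_eq_of_apply_eq_ite hg _ hppos)
    (isAdjointPair_ad_comp_ad hinv u v)

/-- Lemma 4.1, eq. (4.2): for a (1/2)ℤ-graded finite-dimensional
Lie algebra with a compatible non-degenerate invariant symmetric bilinear form,
and `u v` such that `ad u ∘ ad v` preserves the grading,
`κ_{<0}(u,v) = κ_{>0}(u,v) - tr_{g_{>0}}(p_{>0} ∘ ad [u,v])`.
The grading is indexed by `ℚ` (supported on half-integers), `pneg`/`ppos` are
the projections onto `g_{<0}`/`g_{>0}` along the grading. -/
theorem stmt1 {F L : Type*} [Field F] [CharZero F] [LieRing L] [LieAlgebra F L]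
    [FiniteDimensional F L]
    (g : ℚ → Submodule F L) (hInt : DirectSum.IsInternal g)
    (hbr : ∀ (i j : ℚ), ∀ x ∈ g i, ∀ y ∈ g j, ⁅x, y⁆ ∈ g (i + j))
    (B : L →ₗ[F] L →ₗ[F] F)
    (hsymm : ∀ x y, B x y = B y x)
    (hinv : ∀ x y z, B ⁅x, y⁆ z = B x ⁅y, z⁆)
    (hnd : ∀ x, (∀ y, B x y = 0) → x = 0)
    (hcompat : ∀ (i j : ℚ), i + j ≠ 0 → ∀ x ∈ g i, ∀ y ∈ g j, B x y = 0)
    (pneg ppos : Module.End F L)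
    (hpneg : ∀ (j : ℚ), ∀ a ∈ g j, pneg a = if j < 0 then a else 0)
    (hppos : ∀ (j : ℚ), ∀ a ∈ g j, ppos a = if 0 < j then a else 0)
    (u v : L)
    (hpres : ∀ (j : ℚ), ∀ a ∈ g j, ⁅u, ⁅v, a⁆⁆ ∈ g j) :
    LinearMap.trace F L (pneg ∘ₗ (LieAlgebra.ad F L u ∘ₗ LieAlgebra.ad F L v))
      = LinearMap.trace F L (ppos ∘ₗ (LieAlgebra.ad F L u ∘ₗ LieAlgebra.ad F L v))
        - LinearMap.trace F L (ppos ∘ₗ LieAlgebra.ad F L ⁅u, v⁆ ∘ₗ ppos) :=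
  stmt1_general g hInt B hinv hnd hcompat pneg ppos hpneg hppos u v
end

section
/- With g, grading, and bilinear form as above, let κ(u,v) = tr_g((ad u)(ad v)) be the Killing form and κ_0(u,v) = tr_g(p_0 ∘ ad u ∘ ad v). Then for all u,v ∈ g such that ad u ∘ ad v preserves the grading, κ_{>0}(u,v) = (1/2)(κ(u,v) − κ_0(u,v) + tr_{g_{>0}}(p_{>0} ∘ ad[u,v])). -/
/-- Lemma 4.1, eq. (4.3): with the same graded setup,
`κ_{>0}(u,v) = (1/2)(κ(u,v) - κ_0(u,v) + tr_{g_{>0}}(p_{>0} ∘ ad[u,v]))`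
for all `u v` such that `ad u ∘ ad v` preserves the grading.  Here `κ` is the
Killing form and `κ_0`, `κ_{>0}` its "partial" analogues cut off by the
projections `pzero`, `ppos` onto `g_0`, `g_{>0}` along the grading. -/
theorem stmt2 {F L : Type*} [Field F] [CharZero F] [LieRing L] [LieAlgebra F L]
    [FiniteDimensional F L]
    (g : ℚ → Submodule F L) (hInt : DirectSum.IsInternal g)
    (hbr : ∀ (i j : ℚ), ∀ x ∈ g i, ∀ y ∈ g j, ⁅x, y⁆ ∈ g (i + j))
    (B : L →ₗ[F] L →ₗ[F] F)
    (hsymm : ∀ x y, B x y = B y x)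
    (hinv : ∀ x y z, B ⁅x, y⁆ z = B x ⁅y, z⁆)
    (hnd : ∀ x, (∀ y, B x y = 0) → x = 0)
    (hcompat : ∀ (i j : ℚ), i + j ≠ 0 → ∀ x ∈ g i, ∀ y ∈ g j, B x y = 0)
    (pzero ppos : Module.End F L)
    (hpzero : ∀ (j : ℚ), ∀ a ∈ g j, pzero a = if j = 0 then a else 0)
    (hppos : ∀ (j : ℚ), ∀ a ∈ g j, ppos a = if 0 < j then a else 0)
    (u v : L)
    (hpres : ∀ (j : ℚ), ∀ a ∈ g j, ⁅u, ⁅v, a⁆⁆ ∈ g j) :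
    LinearMap.trace F L (ppos ∘ₗ (LieAlgebra.ad F L u ∘ₗ LieAlgebra.ad F L v))
      = (1 / 2 : F) *
        (LinearMap.trace F L (LieAlgebra.ad F L u ∘ₗ LieAlgebra.ad F L v)
          - LinearMap.trace F L (pzero ∘ₗ (LieAlgebra.ad F L u ∘ₗ LieAlgebra.ad F L v))
          + LinearMap.trace F L (ppos ∘ₗ LieAlgebra.ad F L ⁅u, v⁆ ∘ₗ ppos)) := by
  classical
  set T : Module.End F L := LieAlgebra.ad F L u ∘ₗ LieAlgebra.ad F L v with hT
  set T' : Module.End F L := LieAlgebra.ad F L v ∘ₗ LieAlgebra.ad F L u with hT'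
  -- induction principle from the internal direct sum
  have hext : ∀ (P : L → Prop), P 0 → (∀ a b, P a → P b → P (a + b)) →
      (∀ j, ∀ a ∈ g j, P a) → ∀ x, P x := by
    intro P h0 hadd hg x
    have hx : x ∈ (⊤ : Submodule F L) := trivial
    rw [← hInt.submodule_iSup_eq_top] at hx
    exact Submodule.iSup_induction (motive := P) g hx hg h0 hadd
  -- key: equal traces for B-adjoint pairs
  have key : ∀ (S S' : Module.End F L), (∀ x y, B (S x) y = B x (S' y)) →
      LinearMap.trace F L S = LinearMap.trace F L S' := by
    intro S S' h
    have hnd' : LinearMap.BilinForm.Nondegenerate B :=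
      ⟨hnd, fun y hy => hnd y (fun x => by rw [hsymm]; exact hy x)⟩
    set e := LinearMap.BilinForm.toDual B hnd' with he
    have hc : e.conj S = Module.Dual.transpose (R := F) (M := L) S' := by
      apply LinearMap.ext; intro φ; apply LinearMap.ext; intro y
      simp only [LinearEquiv.conj_apply, LinearMap.comp_apply, LinearEquiv.coe_coe,
        Module.Dual.transpose_apply]
      have h1 : e (S (e.symm φ)) y = B (S (e.symm φ)) y := rfl
      rw [h1, h (e.symm φ) y]
      exact LinearMap.BilinForm.apply_toDual_symm_apply φ (S' y)
    calc LinearMap.trace F L S = LinearMap.trace F (Module.Dual F L) (e.conj S) :=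
          (LinearMap.trace_conj' S e).symm
      _ = LinearMap.trace F (Module.Dual F L) (Module.Dual.transpose (R := F) (M := L) S') := by
          rw [hc]
      _ = LinearMap.trace F L S' := LinearMap.trace_transpose' S'
  -- adjoint of bracketing
  have hadj1 : ∀ w x y : L, B ⁅w, x⁆ y = - B x ⁅w, y⁆ := by
    intro w x y
    rw [hinv, hsymm, hinv]
    have h2 : (⁅y, w⁆ : L) = -⁅w, y⁆ := (lie_skew y w).symm
    rw [h2, map_neg]
  have hadjS : ∀ x y, B (T x) y = B x (T' y) := by
    intro x y
    simp only [hT, hT', LinearMap.comp_apply, LieAlgebra.ad_apply]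
    rw [hadj1, hadj1, neg_neg]
  -- pneg projection
  set pneg : Module.End F L := LinearMap.id - pzero - ppos with hpnegdef
  have hpneg : ∀ (j : ℚ), ∀ a ∈ g j, pneg a = if j < 0 then a else 0 := by
    intro j a ha
    simp only [hpnegdef, LinearMap.sub_apply, LinearMap.id_apply, hpzero j a ha, hppos j a ha]
    rcases lt_trichotomy j 0 with h | h | h
    · simp [h, h.ne, not_lt_of_gt h]
    · simp [h]
    · simp [h, h.ne', not_lt_of_gt h, asymm h]
  -- adjoint of pneg is ppos
  have hadjp : ∀ x y, B (pneg x) y = B x (ppos y) := by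
    intro x
    refine hext (fun x => ∀ y, B (pneg x) y = B x (ppos y)) (by simp) ?_ ?_ x
    · intro a b ha hb y
      simp only [map_add, LinearMap.add_apply, ha y, hb y]
    · intro i a ha
      intro y
      refine hext (fun y => B (pneg a) y = B a (ppos y)) (by simp) ?_ ?_ y
      · intro c d hc hd
        simp only [map_add, hc, hd]
      · intro j b hb
        rw [hpneg i a ha, hppos j b hb]
        by_cases hij : i + j = 0
        · have hji : j = -i := by linarith
          subst hji
          by_cases h1 : i < 0
          · rw [if_pos h1, if_pos (by linarith : (0 : ℚ) < -i)]
          · rw [if_neg h1, if_neg (by simp at h1 ⊢; linarith : ¬ (0 : ℚ) < -i)]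
            simp
        · have h0 := hcompat i j hij a ha b hb
          split_ifs <;> simp [h0]
  -- idempotency of ppos
  have hidem : ppos ∘ₗ ppos = ppos := by
    apply LinearMap.ext
    refine hext (fun x => (ppos ∘ₗ ppos) x = ppos x) (by simp) ?_ ?_
    · intro a b ha hb
      simp only [LinearMap.comp_apply] at ha hb ⊢
      rw [map_add, map_add, ha, hb, ← map_add]
    · intro j a ha
      simp only [LinearMap.comp_apply, hppos j a ha]
      split_ifs with h
      · rw [hppos j a ha, if_pos h]
      · simp
  -- trace identities
  have t1 : LinearMap.trace F L (pneg ∘ₗ T) = LinearMap.trace F L (ppos ∘ₗ T') := by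
    have h1 : LinearMap.trace F L (pneg ∘ₗ T) = LinearMap.trace F L (T' ∘ₗ ppos) := by
      apply key
      intro x y
      simp only [LinearMap.comp_apply]
      rw [hadjp (T x) y, hadjS x (ppos y)]
    rw [h1, LinearMap.trace_comp_comm']
  have t2 : LinearMap.trace F L T = LinearMap.trace F L (pzero ∘ₗ T)
      + LinearMap.trace F L (ppos ∘ₗ T) + LinearMap.trace F L (pneg ∘ₗ T) := by
    have : pneg ∘ₗ T = T - pzero ∘ₗ T - ppos ∘ₗ T := by
      simp [hpnegdef, LinearMap.sub_comp]
    rw [this, map_sub, map_sub]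
    ring
  have t3 : LinearMap.trace F L (ppos ∘ₗ T') = LinearMap.trace F L (ppos ∘ₗ T)
      - LinearMap.trace F L (ppos ∘ₗ LieAlgebra.ad F L ⁅u, v⁆) := by
    have hbrk : LieAlgebra.ad F L ⁅u, v⁆ = T - T' := by
      apply LinearMap.ext; intro x
      simp only [LieAlgebra.ad_apply, hT, hT', LinearMap.sub_apply, LinearMap.comp_apply]
      exact lie_lie u v x
    have : ppos ∘ₗ LieAlgebra.ad F L ⁅u, v⁆ = ppos ∘ₗ T - ppos ∘ₗ T' := by
      rw [hbrk, LinearMap.comp_sub]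
    rw [this, map_sub]
    ring
  have t4 : LinearMap.trace F L (ppos ∘ₗ LieAlgebra.ad F L ⁅u, v⁆ ∘ₗ ppos)
      = LinearMap.trace F L (ppos ∘ₗ LieAlgebra.ad F L ⁅u, v⁆) := by
    have h1 : ppos ∘ₗ LieAlgebra.ad F L ⁅u, v⁆ ∘ₗ ppos
        = (ppos ∘ₗ LieAlgebra.ad F L ⁅u, v⁆) ∘ₗ ppos := by
      rw [LinearMap.comp_assoc]
    rw [h1, LinearMap.trace_comp_comm', ← LinearMap.comp_assoc, hidem]
  rw [t4]
  have := t2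
  rw [t1, t3] at this
  linear_combination (-(1:F)/2) * this
end

section
/- Let g = ⊕_{j∈(1/2)Z} g_j be a (1/2)Z-graded finite-dimensional Lie algebra with non-degenerate invariant symmetric bilinear form (.|.) compatible with the grading, and f ∈ g_{-1}. If the centralizer g^f of f satisfies g^f ⊆ g_{≤0} (the grading is 'good'), then ad f : g_{1/2} → g_{-1/2} is a vector space isomorphism. -/
/-- for a good grading (`g^f ⊆ g_{≤0}`) of a finite-dimensional
Lie algebra with compatible non-degenerate invariant symmetric form and
`f ∈ g_{-1}`, the map `ad f : g_{1/2} → g_{-1/2}` is an isomorphism. -/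
theorem stmt6 {F L : Type*} [Field F] [CharZero F] [LieRing L] [LieAlgebra F L]
    [FiniteDimensional F L]
    (g : ℚ → Submodule F L) (hInt : DirectSum.IsInternal g)
    (hbr : ∀ (i j : ℚ), ∀ x ∈ g i, ∀ y ∈ g j, ⁅x, y⁆ ∈ g (i + j))
    (B : L →ₗ[F] L →ₗ[F] F)
    (hsymm : ∀ x y, B x y = B y x)
    (hinv : ∀ x y z, B ⁅x, y⁆ z = B x ⁅y, z⁆)
    (hnd : ∀ x, (∀ y, B x y = 0) → x = 0)
    (hcompat : ∀ (i j : ℚ), i + j ≠ 0 → ∀ x ∈ g i, ∀ y ∈ g j, B x y = 0)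
    (f : L) (hf : f ∈ g (-1))
    (hgood : ∀ a : L, ⁅f, a⁆ = 0 → a ∈ (⨆ j ∈ Set.Iic (0 : ℚ), g j : Submodule F L)) :
    ∀ hmap : ∀ a ∈ g (1/2 : ℚ), (LieAlgebra.ad F L f) a ∈ g (-(1/2) : ℚ),
      Function.Bijective ((LieAlgebra.ad F L f).restrict hmap) := by
  intro hmap
  classical
  -- Key: nondegeneracy of the pairing between `g i` and `g (-i)`.
  have key : ∀ (i : ℚ) (x : L), x ∈ g i → (∀ y ∈ g (-i), B x y = 0) → x = 0 := by
    intro i x hx h0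
    apply hnd
    intro y
    obtain ⟨z, rfl⟩ : ∃ z : DirectSum ℚ (fun j => g j), DirectSum.coeLinearMap g z = y := hInt.surjective y
    induction z using DirectSum.induction_on with
    | zero => simp
    | of j v =>
        rw [DirectSum.coeLinearMap_of]
        by_cases hj : i + j = 0
        · have hji : j = -i := by linarith
          exact h0 v (by rw [← hji]; exact v.2)
        · exact hcompat i j hj x hx v v.2
    | add z1 z2 h1 h2 =>
        rw [map_add, map_add, h1, h2, add_zero]
  -- Dimension comparison via the dual space.
  have dualmap : ∀ i : ℚ, Module.finrank F (g i) ≤ Module.finrank F (g (-i)) := by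
    intro i
    let φ : g i →ₗ[F] Module.Dual F (g (-i)) :=
      (B.comp (g i).subtype).compl₂ (g (-i)).subtype
    have hφ : Function.Injective φ := by
      intro a b hab
      rw [← sub_eq_zero] at hab ⊢
      have : ((a - b : g i) : L) = 0 := by
        apply key i _ (a - b).2
        intro y hy
        have h2 : φ (a - b) ⟨y, hy⟩ = 0 := by rw [map_sub, hab]; simp
        simpa [φ] using h2
      exact Subtype.ext (by simpa using this)
    calc Module.finrank F (g i) ≤ Module.finrank F (Module.Dual F (g (-i))) :=
          LinearMap.finrank_le_finrank_of_injective hφ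
      _ = Module.finrank F (g (-i)) := Subspace.dual_finrank_eq
  have hdim : Module.finrank F (g (1/2 : ℚ)) = Module.finrank F (g (-(1/2) : ℚ)) := by
    refine le_antisymm (dualmap (1/2)) ?_
    have := dualmap (-(1/2))
    rwa [neg_neg] at this
  -- Injectivity of the restricted map.
  have hinj : Function.Injective ((LieAlgebra.ad F L f).restrict hmap) := by
    rw [← LinearMap.ker_eq_bot]
    rw [Submodule.eq_bot_iff]
    intro a ha
    have ha' : ⁅f, (a : L)⁆ = 0 := by
      have := congrArg (Subtype.val) (LinearMap.mem_ker.mp ha)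
      simpa [LinearMap.restrict_coe_apply, LieAlgebra.ad_apply] using this
    have hmem : (a : L) ∈ (⨆ j ∈ Set.Iic (0 : ℚ), g j : Submodule F L) := hgood _ ha'
    have hdis : Disjoint (g (1/2 : ℚ)) (⨆ j ∈ Set.Iic (0 : ℚ), g j) :=
      hInt.submodule_iSupIndep.disjoint_biSup (by norm_num)
    have : (a : L) = 0 := Submodule.disjoint_def.mp hdis _ a.2 hmem
    exact Subtype.ext this
  exact ⟨hinj, (LinearMap.injective_iff_surjective_of_finrank_eq_finrank hdim).mp hinj⟩
end

section
/- Let g = ⊕_{j∈(1/2)Z} g_j be a finite-dimensional graded Lie algebra over a field of characteristic 0, with non-degenerate invariant symmetric bilinear form (.|.), and f ∈ g_{-1}. Define the bilinear form <a,b> = (f | [a,b]) on g_{1/2}. Then <.,.> is skew-symmetric, and it is non-degenerate if and only if ad f : g_{1/2} → g_{-1/2} is an isomorphism. -/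
/-!
Skew-symmetry is the antisymmetry of the bracket. By invariance `(f | [a, b]) = ([f, a] | b)`,
and since `(.|.)` pairs `g_{-1/2}` non-degenerately with `g_{1/2}`, the radical of `<.,.>` is
the kernel of `ad f` on `g_{1/2}`. The same pairing embeds each `g_i` into the dual of `g_{-i}`,
so `g_{1/2}` and `g_{-1/2}` have equal dimension and injectivity of `ad f` is bijectivity.
-/

section GradedPairing

variable {ι R M : Type*} [AddGroup ι] [CommSemiring R] [AddCommMonoid M] [Module R M]

theorem eq_zero_of_forall_pairing_neg_eq_zero (g : ι → Submodule R M) (hspan : ⨆ i, g i = ⊤)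
    (B : M →ₗ[R] M →ₗ[R] R) (hnd : ∀ x, (∀ y, B x y = 0) → x = 0)
    (hcompat : ∀ (i j : ι), i + j ≠ 0 → ∀ x ∈ g i, ∀ y ∈ g j, B x y = 0)
    {i : ι} {x : M} (hx : x ∈ g i) (h : ∀ y ∈ g (-i), B x y = 0) : x = 0 := by
  refine hnd x fun y => ?_
  have hy : y ∈ ⨆ j, g j := hspan ▸ Submodule.mem_top
  refine Submodule.iSup_induction g (motive := fun y => B x y = 0) hy (fun j z hz => ?_)
    (map_zero _) fun a b ha hb => by rw [map_add, ha, hb, add_zero]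
  by_cases hij : i + j = 0
  · exact h z (neg_eq_of_add_eq_zero_right hij ▸ hz)
  · exact hcompat i j hij x hx z hz

end GradedPairing

section GradedDimension

variable {ι K V : Type*} [AddGroup ι] [Field K] [AddCommGroup V] [Module K V]
  [FiniteDimensional K V]

theorem finrank_le_finrank_neg_of_pairing (g : ι → Submodule K V) (hspan : ⨆ i, g i = ⊤)
    (B : V →ₗ[K] V →ₗ[K] K) (hnd : ∀ x, (∀ y, B x y = 0) → x = 0)
    (hcompat : ∀ (i j : ι), i + j ≠ 0 → ∀ x ∈ g i, ∀ y ∈ g j, B x y = 0) (i : ι) :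
    Module.finrank K (g i) ≤ Module.finrank K (g (-i)) := by
  let φ : g i →ₗ[K] Module.Dual K (g (-i)) := (B.domRestrict (g i)).compl₂ (g (-i)).subtype
  have hφ : Function.Injective φ := by
    refine (injective_iff_map_eq_zero φ).mpr fun x hx => Subtype.ext ?_
    refine eq_zero_of_forall_pairing_neg_eq_zero g hspan B hnd hcompat x.2 fun y hy => ?_
    exact LinearMap.congr_fun hx ⟨y, hy⟩
  calc Module.finrank K (g i) ≤ Module.finrank K (Module.Dual K (g (-i))) :=
        LinearMap.finrank_le_finrank_of_injective hφ
    _ = Module.finrank K (g (-i)) := Subspace.dual_finrank_eq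

theorem finrank_eq_finrank_neg_of_pairing (g : ι → Submodule K V) (hspan : ⨆ i, g i = ⊤)
    (B : V →ₗ[K] V →ₗ[K] K) (hnd : ∀ x, (∀ y, B x y = 0) → x = 0)
    (hcompat : ∀ (i j : ι), i + j ≠ 0 → ∀ x ∈ g i, ∀ y ∈ g j, B x y = 0) (i : ι) :
    Module.finrank K (g i) = Module.finrank K (g (-i)) := by
  refine le_antisymm (finrank_le_finrank_neg_of_pairing g hspan B hnd hcompat i) ?_
  have h := finrank_le_finrank_neg_of_pairing g hspan B hnd hcompat (-i)
  rwa [neg_neg] at h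

end GradedDimension

section LieForm

variable {ι R L : Type*} [AddGroup ι] [CommRing R] [LieRing L] [LieAlgebra R L]

theorem lie_eq_zero_iff_forall_form_lie_eq_zero (g : ι → Submodule R L) (hspan : ⨆ i, g i = ⊤)
    (B : L →ₗ[R] L →ₗ[R] R) (hinv : ∀ x y z, B ⁅x, y⁆ z = B x ⁅y, z⁆)
    (hnd : ∀ x, (∀ y, B x y = 0) → x = 0)
    (hcompat : ∀ (i j : ι), i + j ≠ 0 → ∀ x ∈ g i, ∀ y ∈ g j, B x y = 0)
    {i : ι} {f a : L} (hfa : ⁅f, a⁆ ∈ g i) :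
    ⁅f, a⁆ = 0 ↔ ∀ b ∈ g (-i), B f ⁅a, b⁆ = 0 := by
  simp only [← hinv]
  refine ⟨fun h b _ => by rw [h, map_zero, LinearMap.zero_apply], fun h => ?_⟩
  exact eq_zero_of_forall_pairing_neg_eq_zero g hspan B hnd hcompat hfa h

end LieForm

theorem stmt7_general {F L : Type*} [Field F] [LieRing L] [LieAlgebra F L]
    [FiniteDimensional F L]
    (g : ℚ → Submodule F L) (hInt : DirectSum.IsInternal g)
    (B : L →ₗ[F] L →ₗ[F] F)
    (hinv : ∀ x y z, B ⁅x, y⁆ z = B x ⁅y, z⁆)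
    (hnd : ∀ x, (∀ y, B x y = 0) → x = 0)
    (hcompat : ∀ (i j : ℚ), i + j ≠ 0 → ∀ x ∈ g i, ∀ y ∈ g j, B x y = 0)
    (f : L) :
    (∀ a ∈ g (1/2 : ℚ), ∀ b ∈ g (1/2 : ℚ), B f ⁅a, b⁆ = - B f ⁅b, a⁆) ∧
    ∀ hmap : ∀ a ∈ g (1/2 : ℚ), (LieAlgebra.ad F L f) a ∈ g (-(1/2) : ℚ),
      ((∀ a ∈ g (1/2 : ℚ), (∀ b ∈ g (1/2 : ℚ), B f ⁅a, b⁆ = 0) → a = 0) ↔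
        Function.Bijective ((LieAlgebra.ad F L f).restrict hmap)) := by
  have hspan := hInt.submodule_iSup_eq_top
  refine ⟨fun a _ b _ => by rw [← lie_skew b a, map_neg, neg_neg], fun hmap => ?_⟩
  set T := (LieAlgebra.ad F L f).restrict hmap
  have hker : ∀ a (ha : a ∈ g (1/2 : ℚ)),
      T ⟨a, ha⟩ = 0 ↔ ∀ b ∈ g (1/2 : ℚ), B f ⁅a, b⁆ = 0 := fun a ha => by
    simpa [T, Subtype.ext_iff] using
      lie_eq_zero_iff_forall_form_lie_eq_zero g hspan B hinv hnd hcompat (hmap a ha)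
  have hdim : Module.finrank F (g (1/2 : ℚ)) = Module.finrank F (g (-(1/2) : ℚ)) :=
    finrank_eq_finrank_neg_of_pairing g hspan B hnd hcompat _
  have hbij : Function.Bijective T ↔ Function.Injective T :=
    ⟨And.left, fun h => ⟨h, (LinearMap.injective_iff_surjective_of_finrank_eq_finrank hdim).mp h⟩⟩
  rw [hbij, injective_iff_map_eq_zero, Subtype.forall]
  exact forall₂_congr fun a ha => by rw [hker, Subtype.ext_iff]; rfl

/-- the bilinear form `<a,b> = (f | [a,b])` on `g_{1/2}` is
skew-symmetric, and it is non-degenerate on `g_{1/2}` if and only if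
`ad f : g_{1/2} → g_{-1/2}` is an isomorphism. -/
theorem stmt7 {F L : Type*} [Field F] [CharZero F] [LieRing L] [LieAlgebra F L]
    [FiniteDimensional F L]
    (g : ℚ → Submodule F L) (hInt : DirectSum.IsInternal g)
    (hbr : ∀ (i j : ℚ), ∀ x ∈ g i, ∀ y ∈ g j, ⁅x, y⁆ ∈ g (i + j))
    (B : L →ₗ[F] L →ₗ[F] F)
    (hsymm : ∀ x y, B x y = B y x)
    (hinv : ∀ x y z, B ⁅x, y⁆ z = B x ⁅y, z⁆)
    (hnd : ∀ x, (∀ y, B x y = 0) → x = 0)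
    (hcompat : ∀ (i j : ℚ), i + j ≠ 0 → ∀ x ∈ g i, ∀ y ∈ g j, B x y = 0)
    (f : L) (hf : f ∈ g (-1)) :
    (∀ a ∈ g (1/2 : ℚ), ∀ b ∈ g (1/2 : ℚ), B f ⁅a, b⁆ = - B f ⁅b, a⁆) ∧
    ∀ hmap : ∀ a ∈ g (1/2 : ℚ), (LieAlgebra.ad F L f) a ∈ g (-(1/2) : ℚ),
      ((∀ a ∈ g (1/2 : ℚ), (∀ b ∈ g (1/2 : ℚ), B f ⁅a, b⁆ = 0) → a = 0) ↔
        Function.Bijective ((LieAlgebra.ad F L f).restrict hmap)) :=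
  stmt7_general g hInt B hinv hnd hcompat f
end
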